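/- arXiv:2310.20433 — 2 statements merged into one kernel-verified Lean document; each statement's English description precedes it below -/
import Mathlib

section
/- Let k ≥ 1 and let Adj be a symmetric adjacency relation on the vertex set Fin k × Fin k (representing a graph G on a k×k grid, where (i,j) denotes the vertex in row i and column j). Then the following are equivalent: (1) there exists b : Fin k → Fin k such that for all i ≠ i' in Fin k, the vertices (i, b i) and (i', b i') are adjacent (i.e., G contains a k-clique with exactly one vertex from each row); (2) there exist functions x : Fin (k+1) → ℚ and y : Fin k → ℚ whose combined list of values x 0, …, x k, y 0, …, y (k-1) consists of 2k+1 pairwise distinct rationals, such that (a) x (j.castSucc) < x (j.succ) for every j : Fin k, (b) x 0 < y i and y i < x (Fin.last k) for every i : Fin k, and (c) for every two distinct pairs (a,b) and (c,d) in Fin k × Fin k that are NOT adjacent under Adj, it is not the case that both x (b.castSucc) < y a < x (b.succ) and x (d.castSucc) < y c < x (d.succ). -/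
/-!
The chain `x 0 < ⋯ < x k` cuts `(x 0, x k)` into `k` open cells. A value `y i` in that interval
that avoids every `x j` lies in exactly one cell, which we read as the column `b i` chosen in
row `i`; the clauses then say exactly that the chosen vertices are pairwise adjacent. Conversely,
a row-transversal clique is realised by putting `y i` into cell `b i`, at an offset depending on
`i` so that all values stay distinct.
-/

open Set Function

namespace Fin

variable {α : Type*} {n : ℕ}

lemma eq_of_mem_Ioo_castSucc_succ [Preorder α] {x : Fin (n + 1) → α} (hx : Monotone x) {t : α}
    {i j : Fin n} (hi : t ∈ Ioo (x i.castSucc) (x i.succ))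
    (hj : t ∈ Ioo (x j.castSucc) (x j.succ)) : i = j := by
  have not_lt_of_mem : ∀ {i j : Fin n}, t ∈ Ioo (x i.castSucc) (x i.succ) →
      t ∈ Ioo (x j.castSucc) (x j.succ) → ¬ i < j := fun hi hj hij =>
    (hi.2.trans_le (hx (succ_le_castSucc_iff.2 hij))).trans hj.1 |>.false
  exact le_antisymm (le_of_not_gt (not_lt_of_mem hj hi)) (le_of_not_gt (not_lt_of_mem hi hj))

lemma ne_of_mem_Ioo_castSucc_succ [Preorder α] {x : Fin (n + 1) → α} (hx : StrictMono x) {t : α}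
    {i : Fin n} (hi : t ∈ Ioo (x i.castSucc) (x i.succ)) (j : Fin (n + 1)) : x j ≠ t := by
  rintro rfl
  exact (castSucc_lt_iff_succ_le.1 (hx.lt_iff_lt.1 hi.1)).not_gt (hx.lt_iff_lt.1 hi.2)

lemma exists_mem_Ioo_castSucc_succ [LinearOrder α] (x : Fin (n + 1) → α) {t : α} (h0 : x 0 < t)
    (hlast : t < x (last n)) (hne : ∀ j, x j ≠ t) :
    ∃ i : Fin n, t ∈ Ioo (x i.castSucc) (x i.succ) := by
  induction n with
  | zero => exact (h0.trans hlast |>.false).elim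
  | succ n ih =>
    rcases (hne (last n).castSucc).lt_or_gt with hlt | hgt
    · exact ⟨last n, hlt, hlast⟩
    · obtain ⟨i, hi⟩ := ih (x ∘ castSucc) h0 hgt fun j => hne j.castSucc
      exact ⟨i.castSucc, hi⟩

end Fin

lemma exists_injective_strictMono_mem_Ioo {m n : ℕ} (b : Fin m → Fin n) :
    ∃ (x : Fin (n + 1) → ℚ) (y : Fin m → ℚ), Injective (Sum.elim x y) ∧ StrictMono x ∧
      ∀ i, y i ∈ Ioo (x (b i).castSucc) (x (b i).succ) := by
  -- cells of length `m + 1` leave room for a distinct offset `i + 1` for every row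
  let X : Fin (n + 1) → ℕ := fun j => (m + 1) * j
  let Y : Fin m → ℕ := fun i => (m + 1) * b i + (i + 1)
  have hX : StrictMono X := fun j j' h => Nat.mul_lt_mul_of_pos_left h m.succ_pos
  have hY : ∀ i, Y i ∈ Ioo (X (b i).castSucc) (X (b i).succ) := fun i => by
    simp only [X, Y, mem_Ioo, Fin.val_castSucc, Fin.val_succ, Nat.mul_succ]
    omega
  have hYinj : Injective Y := fun i i' h => by
    have hb : b i = b i' := Fin.eq_of_mem_Ioo_castSucc_succ hX.monotone (hY i) (h ▸ hY i')
    simp only [Y, hb] at h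
    omega
  refine ⟨Nat.cast ∘ X, Nat.cast ∘ Y, ?_, Nat.strictMono_cast.comp hX, fun i => ?_⟩
  · rw [← Sum.comp_elim]
    exact Nat.cast_injective.comp <| hX.injective.sumElim hYinj
      fun j i => Fin.ne_of_mem_Ioo_castSucc_succ hX (hY i) j
  · exact ⟨Nat.cast_lt.2 (hY i).1, Nat.cast_lt.2 (hY i).2⟩

theorem kClique_iff_permSAT_general (k : ℕ)
    (Adj : (Fin k × Fin k) → (Fin k × Fin k) → Prop) :
    (∃ b : Fin k → Fin k, ∀ i i' : Fin k, i ≠ i' → Adj (i, b i) (i', b i')) ↔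
    (∃ (x : Fin (k + 1) → ℚ) (y : Fin k → ℚ),
      Function.Injective (Sum.elim x y) ∧
      (∀ j : Fin k, x j.castSucc < x j.succ) ∧
      (∀ i : Fin k, x 0 < y i ∧ y i < x (Fin.last k)) ∧
      (∀ a b c d : Fin k, (a, b) ≠ (c, d) → ¬ Adj (a, b) (c, d) →
        ¬ ((x b.castSucc < y a ∧ y a < x b.succ) ∧
           (x d.castSucc < y c ∧ y c < x d.succ)))) := by
  constructor
  · rintro ⟨b, hb⟩
    obtain ⟨x, y, hinj, hx, hy⟩ := exists_injective_strictMono_mem_Ioo b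
    refine ⟨x, y, hinj, Fin.strictMono_iff_lt_succ.1 hx, fun i => ⟨?_, ?_⟩, ?_⟩
    · exact (hy i).1.trans_le' (hx.monotone (Fin.zero_le _))
    · exact (hy i).2.trans_le (hx.monotone (Fin.le_last _))
    rintro a c a' c' hne hadj ⟨hac, hac'⟩
    obtain rfl := Fin.eq_of_mem_Ioo_castSucc_succ hx.monotone hac (hy a)
    obtain rfl := Fin.eq_of_mem_Ioo_castSucc_succ hx.monotone hac' (hy a')
    exact hadj (hb a a' fun h => hne (h ▸ rfl))
  · rintro ⟨x, y, hinj, -, hrange, hclause⟩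
    have hcell (i : Fin k) : ∃ j : Fin k, y i ∈ Ioo (x j.castSucc) (x j.succ) :=
      Fin.exists_mem_Ioo_castSucc_succ x (hrange i).1 (hrange i).2 fun j h =>
        Sum.inl_ne_inr (hinj h)
    choose b hb using hcell
    refine ⟨b, fun i i' hne => of_not_not fun hadj => ?_⟩
    exact hclause i (b i) i' (b i') (fun h => hne (Prod.ext_iff.1 h).1) hadj ⟨hb i, hb i'⟩

/-- Correctness of the reduction from `k × k`-Clique to 4-Permutation SAT:
the grid graph `Adj` on `Fin k × Fin k` has a clique with one vertex per row
iff the constructed formula admits a satisfying injective rational assignment. -/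
theorem kClique_iff_permSAT (k : ℕ) (hk : 1 ≤ k)
    (Adj : (Fin k × Fin k) → (Fin k × Fin k) → Prop)
    (hsymm : ∀ u v, Adj u v → Adj v u) :
    (∃ b : Fin k → Fin k, ∀ i i' : Fin k, i ≠ i' → Adj (i, b i) (i', b i')) ↔
    (∃ (x : Fin (k + 1) → ℚ) (y : Fin k → ℚ),
      Function.Injective (Sum.elim x y) ∧
      (∀ j : Fin k, x j.castSucc < x j.succ) ∧
      (∀ i : Fin k, x 0 < y i ∧ y i < x (Fin.last k)) ∧
      (∀ a b c d : Fin k, (a, b) ≠ (c, d) → ¬ Adj (a, b) (c, d) →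
        ¬ ((x b.castSucc < y a ∧ y a < x b.succ) ∧
           (x d.castSucc < y c ∧ y c < x d.succ)))) :=
  kClique_iff_permSAT_general k Adj
end

section
/- Let k, m ≥ 1 and let C : Fin m → Finset (Fin k × Fin k) with C ℓ nonempty for every ℓ (each C ℓ is a clause, each pair (a,b) ∈ C ℓ is the literal 'x_a < x_b'). Then the following are equivalent: (1) there exists an injective function f : Fin k → ℚ such that for every ℓ : Fin m there is a pair (a,b) ∈ C ℓ with f a < f b (i.e., the formula ⋀_ℓ ⋁_{(a,b) ∈ C ℓ} (x_a < x_b) is satisfiable); (2) there exists a selection σ : Fin m → Fin k × Fin k with σ ℓ ∈ C ℓ for every ℓ, such that the relation r on Fin k defined by r a b ↔ (∃ ℓ, σ ℓ = (a,b)) has no cycle, i.e., there is no a with Relation.TransGen r a a. -/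
/-- Correctness of the reduction from Permutation SAT to Rabin games:
the formula `⋀_ℓ ⋁_{(a,b) ∈ C ℓ} (x_a < x_b)` is satisfiable iff one can select
one literal from each clause so that the selected literals are acyclic. -/
theorem permSAT_iff_acyclic_selection (k m : ℕ) (hk : 1 ≤ k) (hm : 1 ≤ m)
    (C : Fin m → Finset (Fin k × Fin k)) (hC : ∀ ℓ, (C ℓ).Nonempty) :
    (∃ f : Fin k → ℚ, Function.Injective f ∧
      ∀ ℓ : Fin m, ∃ p ∈ C ℓ, f p.1 < f p.2) ↔
    (∃ σ : Fin m → Fin k × Fin k, (∀ ℓ, σ ℓ ∈ C ℓ) ∧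
      ¬ ∃ a : Fin k, Relation.TransGen (fun a b => ∃ ℓ, σ ℓ = (a, b)) a a) := by
  constructor
  · rintro ⟨f, hf, hsat⟩
    choose σ hσ hlt using hsat
    refine ⟨σ, hσ, ?_⟩
    rintro ⟨a, ha⟩
    have key : ∀ x y : Fin k,
        Relation.TransGen (fun a b => ∃ ℓ, σ ℓ = (a, b)) x y → f x < f y := by
      intro x y h
      induction h with
      | single h => obtain ⟨ℓ, hℓ⟩ := h; simpa [hℓ] using hlt ℓ
      | tail _ h ih =>
        obtain ⟨ℓ, hℓ⟩ := h
        exact ih.trans (by simpa [hℓ] using hlt ℓ)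
    exact lt_irrefl _ (key a a ha)
  · rintro ⟨σ, hσ, hacyc⟩
    set r : Fin k → Fin k → Prop := fun a b => ∃ ℓ, σ ℓ = (a, b) with hr
    set q : Fin k → Fin k → Prop := fun a b => a = b ∨ Relation.TransGen r a b with hq
    have hpo : IsPartialOrder (Fin k) q :=
      { refl := fun a => Or.inl rfl
        trans := by
          intro a b c hab hbc
          rcases hab with rfl | hab
          · exact hbc
          · rcases hbc with rfl | hbc
            · exact Or.inr hab
            · exact Or.inr (hab.trans hbc)
        antisymm := by
          intro a b hab hba
          rcases hab with rfl | hab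
          · rfl
          · rcases hba with rfl | hba
            · rfl
            · exact absurd ⟨a, hab.trans hba⟩ hacyc }
    obtain ⟨s, hs, hqs⟩ := extend_partialOrder q
    classical
    have hcard : ∀ a b : Fin k, s a b → a ≠ b →
        (Finset.univ.filter (fun x => s x a ∧ x ≠ a)).card <
        (Finset.univ.filter (fun x => s x b ∧ x ≠ b)).card := by
      intro a b hab hne
      apply Finset.card_lt_card
      rw [Finset.ssubset_iff_of_subset]
      · exact ⟨a, by simp [hab, hne], by simp⟩
      · intro x hx
        simp only [Finset.mem_filter, Finset.mem_univ, true_and] at hx ⊢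
        refine ⟨hs.trans _ _ _ hx.1 hab, ?_⟩
        rintro rfl
        exact hx.2 (hs.antisymm _ _ hx.1 hab)
    refine ⟨fun a => ((Finset.univ.filter (fun b => s b a ∧ b ≠ a)).card : ℚ), ?_, ?_⟩
    · intro a b hab
      by_contra hne
      rcases hs.total a b with h | h
      · exact absurd hab (by beta_reduce; exact_mod_cast (hcard a b h hne).ne)
      · exact absurd hab (by beta_reduce; exact_mod_cast (hcard b a h (Ne.symm hne)).ne')
    · intro ℓ
      refine ⟨σ ℓ, hσ ℓ, ?_⟩
      have hne : (σ ℓ).1 ≠ (σ ℓ).2 := by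
        intro h
        exact hacyc ⟨(σ ℓ).1,
          Relation.TransGen.single ⟨ℓ, by rw [Prod.ext_iff]; exact ⟨rfl, h.symm⟩⟩⟩
      have hsab : s (σ ℓ).1 (σ ℓ).2 :=
        hqs _ _ (Or.inr (Relation.TransGen.single ⟨ℓ, rfl⟩))
      beta_reduce
      exact_mod_cast hcard _ _ hsab hne
end
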